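/- Subject reduction for System F (polymorphic λ-calculus): if Γ ⊢ p : τ and p β-reduces to p' (either by term β-reduction (λx:σ. q) v ↝ q[x := v] or type β-reduction (ΛX. q) τ' ↝ q[X := τ']), then Γ ⊢ p' : τ. -/

import Mathlib

/-- System F types (de Bruijn type variables). -/
inductive Ty : Type
  | var : ℕ → Ty
  | arrow : Ty → Ty → Ty
  | all : Ty → Ty

/-- Shift free type variables ≥ d by one. -/
def Ty.lift (d : ℕ) : Ty → Ty
  | .var n => if n < d then .var n else .var (n + 1)
  | .arrow a b => .arrow (a.lift d) (b.lift d)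
  | .all t => .all (t.lift (d + 1))

/-- Type substitution `τ[X_k := u]`. -/
def Ty.subst : Ty → ℕ → Ty → Ty
  | .var n, k, u => if n < k then .var n else if n = k then u else .var (n - 1)
  | .arrow a b, k, u => .arrow (a.subst k u) (b.subst k u)
  | .all t, k, u => .all (t.subst (k + 1) (u.lift 0))

/-- System F terms (de Bruijn term and type variables). -/
inductive Tm : Type
  | var : ℕ → Tm
  | lam : Ty → Tm → Tm
  | app : Tm → Tm → Tm
  | tlam : Tm → Tm
  | tapp : Tm → Ty → Tm

/-- Shift free term variables ≥ d by one. -/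
def Tm.lift (d : ℕ) : Tm → Tm
  | .var n => if n < d then .var n else .var (n + 1)
  | .lam σ t => .lam σ (t.lift (d + 1))
  | .app t u => .app (t.lift d) (u.lift d)
  | .tlam t => .tlam (t.lift d)
  | .tapp t τ => .tapp (t.lift d) τ

/-- Shift free type variables ≥ d by one inside a term. -/
def Tm.tyLift (d : ℕ) : Tm → Tm
  | .var n => .var n
  | .lam σ t => .lam (σ.lift d) (t.tyLift d)
  | .app t u => .app (t.tyLift d) (u.tyLift d)
  | .tlam t => .tlam (t.tyLift (d + 1))
  | .tapp t τ => .tapp (t.tyLift d) (τ.lift d)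

/-- Term substitution `p[x_k := u]`. -/
def Tm.subst : Tm → ℕ → Tm → Tm
  | .var n, k, u => if n < k then .var n else if n = k then u else .var (n - 1)
  | .lam σ t, k, u => .lam σ (t.subst (k + 1) (u.lift 0))
  | .app t t', k, u => .app (t.subst k u) (t'.subst k u)
  | .tlam t, k, u => .tlam (t.subst k (u.tyLift 0))
  | .tapp t τ, k, u => .tapp (t.subst k u) τ

/-- Type substitution in a term, `p[X_k := τ']`. -/
def Tm.tySubst : Tm → ℕ → Ty → Tm
  | .var n, _, _ => .var n
  | .lam σ t, k, τ' => .lam (σ.subst k τ') (t.tySubst k τ')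
  | .app t u, k, τ' => .app (t.tySubst k τ') (u.tySubst k τ')
  | .tlam t, k, τ' => .tlam (t.tySubst (k + 1) (τ'.lift 0))
  | .tapp t τ, k, τ' => .tapp (t.tySubst k τ') (τ.subst k τ')

/-- Typing judgment `Γ ⊢ p : τ` for System F. -/
inductive Typing : List Ty → Tm → Ty → Prop
  | var {Γ n τ} : Γ[n]? = some τ → Typing Γ (.var n) τ
  | lam {Γ σ t τ} : Typing (σ :: Γ) t τ → Typing Γ (.lam σ t) (.arrow σ τ)
  | app {Γ t u σ τ} : Typing Γ t (.arrow σ τ) → Typing Γ u σ → Typing Γ (.app t u) τ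
  | tlam {Γ t τ} : Typing (Γ.map (Ty.lift 0)) t τ → Typing Γ (.tlam t) (.all τ)
  | tapp {Γ t τ τ'} : Typing Γ t (.all τ) → Typing Γ (.tapp t τ') (τ.subst 0 τ')

/-- One-step β-reduction: term β, type β, and closure under any context. -/
inductive Step : Tm → Tm → Prop
  | beta (σ : Ty) (t u : Tm) : Step (.app (.lam σ t) u) (t.subst 0 u)
  | tbeta (t : Tm) (τ' : Ty) : Step (.tapp (.tlam t) τ') (t.tySubst 0 τ')
  | lam {σ t t'} : Step t t' → Step (.lam σ t) (.lam σ t')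
  | appL {t t' u} : Step t t' → Step (.app t u) (.app t' u)
  | appR {t u u'} : Step u u' → Step (.app t u) (.app t u')
  | tlam {t t'} : Step t t' → Step (.tlam t) (.tlam t')
  | tapp {t t' τ} : Step t t' → Step (.tapp t τ) (.tapp t' τ)

/-!
The β-rules substitute into the body of an abstraction, so subject reduction comes down to
two substitution lemmas: typing survives substituting a well-typed term for a term variable,
and substituting a type for a type variable (in term, type and context at once). Pushing
either substitution under a binder needs the matching weakening lemma (lifting term or type
indices), and the type-level cases rest on the usual commutation laws of de Bruijn lifting
and substitution on types.
-/

namespace Ty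

theorem lift_lift_of_le {i j : ℕ} (h : i ≤ j) (a : Ty) :
    (a.lift j).lift i = (a.lift i).lift (j + 1) := by
  induction a generalizing i j with
  | var n => simp only [lift]; split_ifs <;> simp only [lift] <;> split_ifs <;> first | rfl | omega
  | arrow a b iha ihb => simp [lift, iha h, ihb h]
  | all t ih => simp [lift, ih (Nat.succ_le_succ h)]

theorem subst_lift_of_le {i k : ℕ} (h : i ≤ k) (a u : Ty) :
    (a.lift i).subst (k + 1) (u.lift i) = (a.subst k u).lift i := by
  induction a generalizing i k u with
  | var n =>
    simp only [lift, subst]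
    split_ifs <;> simp only [lift, subst] <;> split_ifs <;> first | rfl | omega | (congr 1; omega)
  | arrow a b iha ihb => simp [lift, subst, iha h, ihb h]
  | all t ih =>
    simp only [lift, subst]
    rw [lift_lift_of_le (Nat.zero_le i), ih (Nat.succ_le_succ h)]

theorem lift_subst_of_le {k d : ℕ} (h : k ≤ d) (a u : Ty) :
    (a.subst k u).lift d = (a.lift (d + 1)).subst k (u.lift d) := by
  induction a generalizing k d u with
  | var n =>
    simp only [lift, subst]
    split_ifs <;> simp only [lift, subst] <;> split_ifs <;> first | rfl | omega | (congr 1; omega)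
  | arrow a b iha ihb => simp [lift, subst, iha h, ihb h]
  | all t ih =>
    simp only [lift, subst]
    rw [ih (Nat.succ_le_succ h), lift_lift_of_le (Nat.zero_le d)]

@[simp]
theorem subst_lift_cancel (k : ℕ) (a u : Ty) : (a.lift k).subst k u = a := by
  induction a generalizing k u with
  | var n =>
    simp only [lift]
    split_ifs <;> simp only [subst] <;> split_ifs <;> first | rfl | omega
  | arrow a b iha ihb => simp [lift, subst, iha, ihb]
  | all t ih => simp [lift, subst, ih]

theorem subst_subst_of_le {j k : ℕ} (h : j ≤ k) (a u v : Ty) :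
    (a.subst j v).subst k u = (a.subst (k + 1) (u.lift j)).subst j (v.subst k u) := by
  induction a generalizing j k u v with
  | var n =>
    simp only [subst]
    split_ifs <;> (try simp only [subst]) <;> (try split_ifs) <;>
      first | rfl | omega | simp
  | arrow a b iha ihb => simp [subst, iha h, ihb h]
  | all t ih =>
    simp only [subst]
    rw [ih (Nat.succ_le_succ h), lift_lift_of_le (Nat.zero_le j), subst_lift_of_le (Nat.zero_le k)]

theorem map_lift_map_lift_zero (d : ℕ) (Γ : List Ty) :
    (Γ.map (lift 0)).map (lift (d + 1)) = (Γ.map (lift d)).map (lift 0) := by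
  simp [List.map_map, Function.comp_def, lift_lift_of_le (Nat.zero_le d)]

theorem map_subst_map_lift_zero (k : ℕ) (u : Ty) (Γ : List Ty) :
    (Γ.map (lift 0)).map (·.subst (k + 1) (u.lift 0)) = (Γ.map (·.subst k u)).map (lift 0) := by
  simp [List.map_map, Function.comp_def, subst_lift_of_le (Nat.zero_le k)]

end Ty

namespace Typing

theorem lift {Γ₁ Γ₂ : List Ty} {t : Tm} {τ : Ty} (h : Typing (Γ₁ ++ Γ₂) t τ) (σ : Ty) :
    Typing (Γ₁ ++ σ :: Γ₂) (t.lift Γ₁.length) τ := by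
  generalize hΓ : Γ₁ ++ Γ₂ = Γ at h
  induction h generalizing Γ₁ Γ₂ σ with
  | @var Γ n τ hn =>
    subst hΓ
    simp only [Tm.lift]
    split_ifs with hlt
    · exact .var (by rwa [List.getElem?_append_left hlt] at hn ⊢)
    · refine .var ?_
      rw [List.getElem?_append_right (by omega)] at hn ⊢
      rwa [Nat.sub_add_comm (by omega), List.getElem?_cons_succ]
  | lam _ ih => exact .lam (ih (Γ₁ := _ :: Γ₁) σ (by simp [hΓ]))
  | app _ _ iht ihu => exact .app (iht σ hΓ) (ihu σ hΓ)
  | tlam _ ih =>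
    refine .tlam ?_
    simpa using ih (Γ₁ := Γ₁.map (Ty.lift 0)) (σ.lift 0) (by simp [← hΓ])
  | tapp _ ih => exact .tapp (ih σ hΓ)

theorem tyLift {Γ : List Ty} {t : Tm} {τ : Ty} (h : Typing Γ t τ) (d : ℕ) :
    Typing (Γ.map (Ty.lift d)) (t.tyLift d) (τ.lift d) := by
  induction h generalizing d with
  | var hn => exact .var (by simp [hn])
  | lam _ ih => exact .lam (ih d)
  | app _ _ iht ihu => exact .app (iht d) (ihu d)
  | tlam _ ih => exact .tlam (Ty.map_lift_map_lift_zero d _ ▸ ih (d + 1))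
  | tapp _ ih =>
    rw [Ty.lift_subst_of_le (Nat.zero_le d)]
    exact .tapp (ih d)

theorem subst {Γ₁ Γ₂ : List Ty} {t u : Tm} {σ τ : Ty} (h : Typing (Γ₁ ++ σ :: Γ₂) t τ)
    (hu : Typing (Γ₁ ++ Γ₂) u σ) : Typing (Γ₁ ++ Γ₂) (t.subst Γ₁.length u) τ := by
  generalize hΓ : Γ₁ ++ σ :: Γ₂ = Γ at h
  induction h generalizing Γ₁ Γ₂ σ u with
  | @var Γ n τ hn =>
    subst hΓ
    simp only [Tm.subst]
    split_ifs with hlt heq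
    · exact .var (by rwa [List.getElem?_append_left hlt] at hn ⊢)
    · subst heq
      rw [List.getElem?_append_right le_rfl, Nat.sub_self, List.getElem?_cons_zero,
        Option.some_inj] at hn
      exact hn ▸ hu
    · refine .var ?_
      rw [List.getElem?_append_right (by omega)] at hn ⊢
      rwa [show n - Γ₁.length = n - 1 - Γ₁.length + 1 by omega, List.getElem?_cons_succ] at hn
  | lam _ ih => exact .lam (ih (Γ₁ := _ :: Γ₁) (hu.lift (Γ₁ := []) _) (by simp [hΓ]))
  | app _ _ iht ihu => exact .app (iht hu hΓ) (ihu hu hΓ)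
  | tlam _ ih =>
    refine .tlam ?_
    simpa using ih (Γ₁ := Γ₁.map (Ty.lift 0)) (by simpa using hu.tyLift 0) (by simp [← hΓ])
  | tapp _ ih => exact .tapp (ih hu hΓ)

theorem tySubst {Γ : List Ty} {t : Tm} {τ : Ty} (h : Typing Γ t τ) (k : ℕ) (u : Ty) :
    Typing (Γ.map (·.subst k u)) (t.tySubst k u) (τ.subst k u) := by
  induction h generalizing k u with
  | var hn => exact .var (by simp [hn])
  | lam _ ih => exact .lam (ih k u)
  | app _ _ iht ihu => exact .app (iht k u) (ihu k u)
  | tlam _ ih => exact .tlam (Ty.map_subst_map_lift_zero k u _ ▸ ih (k + 1) (u.lift 0))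
  | tapp _ ih =>
    rw [Ty.subst_subst_of_le (Nat.zero_le k)]
    exact .tapp (ih k u)

end Typing

/-- Subject reduction for System F: typing is preserved by one-step β-reduction
(term-level or type-level). -/
theorem subject_reduction {Γ : List Ty} {p p' : Tm} {τ : Ty}
    (h : Typing Γ p τ) (hs : Step p p') : Typing Γ p' τ := by
  induction hs generalizing Γ τ with
  | beta =>
    cases h with | app hlam hu =>
    cases hlam with | lam ht =>
    exact ht.subst (Γ₁ := []) hu
  | tbeta _ τ' =>
    cases h with | tapp htlam =>
    cases htlam with | tlam ht =>
    simpa [List.map_map, Function.comp_def] using ht.tySubst 0 τ'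
  | lam _ ih => cases h with | lam ht => exact .lam (ih ht)
  | appL _ ih => cases h with | app ht hu => exact .app (ih ht) hu
  | appR _ ih => cases h with | app ht hu => exact .app ht (ih hu)
  | tlam _ ih => cases h with | tlam ht => exact .tlam (ih ht)
  | tapp _ ih => cases h with | tapp ht => exact .tapp (ih ht)
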